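/- For any real N×T matrix A of rank at most K, the nuclear norm of A equals the infimum over all factorizations A = B Fᵀ with B an N×K matrix and F a T×K matrix of (1/2)‖B‖_F² + (1/2)‖F‖_F². -/

import Mathlib

/-!
Write a compact singular value decomposition `A = Uᵀ diag(σ) V`, where `U` and `V` have
`r = rank A` orthonormal rows and `∑ σ = ‖A‖_*`. If `A = B Fᵀ`, then
`∑ σ = tr(U B (V F)ᵀ) ≤ ½‖U B‖_F² + ½‖V F‖_F² ≤ ½‖B‖_F² + ½‖F‖_F²`, because multiplying by a
matrix with orthonormal rows does not increase the Frobenius norm. Conversely, since `r ≤ K`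
there is an `r × K` matrix `P` with orthonormal rows, and `B = Uᵀ diag(√σ) P`,
`F = Vᵀ diag(√σ) P` attain the bound.
-/

open Matrix

noncomputable def frobNorm {m n : Type*} [Fintype m] [Fintype n] (A : Matrix m n ℝ) : ℝ :=
  Real.sqrt (∑ i, ∑ j, (A i j) ^ 2)

/-- The nuclear norm of a real matrix: the sum of its singular values, i.e. the sum of the
square roots of the eigenvalues of `Aᴴ * A`. -/
noncomputable def nuclearNorm {m n : Type*} [Fintype m] [Fintype n] [DecidableEq n]
    (A : Matrix m n ℝ) : ℝ :=
  ∑ i, Real.sqrt ((show (Aᵀ * A).IsHermitian by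
    simpa using Matrix.isHermitian_conjTranspose_mul_self A).eigenvalues i)

section Frobenius

variable {m n k : Type*} [Fintype m] [Fintype n] [Fintype k]

lemma frobNorm_nonneg (X : Matrix m n ℝ) : 0 ≤ frobNorm X := Real.sqrt_nonneg _

lemma frobNorm_sq (X : Matrix m n ℝ) : frobNorm X ^ 2 = ∑ i, ∑ j, X i j ^ 2 :=
  Real.sq_sqrt <| Fintype.sum_nonneg fun _ => Fintype.sum_nonneg fun _ => sq_nonneg _

lemma frobNorm_sq_eq_trace_mul_transpose (X : Matrix m n ℝ) :
    frobNorm X ^ 2 = trace (X * Xᵀ) := by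
  rw [frobNorm_sq]
  simp only [trace, diag_apply, mul_apply, transpose_apply, sq]

lemma frobNorm_sq_eq_trace_transpose_mul (X : Matrix m n ℝ) :
    frobNorm X ^ 2 = trace (Xᵀ * X) := by
  rw [frobNorm_sq_eq_trace_mul_transpose, trace_mul_comm]

lemma trace_mul_transpose_le (X Y : Matrix m n ℝ) :
    trace (X * Yᵀ) ≤ 1 / 2 * frobNorm X ^ 2 + 1 / 2 * frobNorm Y ^ 2 := by
  simp only [frobNorm_sq, trace, diag_apply, mul_apply, transpose_apply, Finset.mul_sum,
    ← Finset.sum_add_distrib]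
  gcongr with i _ j _
  nlinarith [two_mul_le_add_sq (X i j) (Y i j)]

lemma frobNorm_mul_le_of_mul_transpose_eq_one [DecidableEq k] {U : Matrix k m ℝ} (hU : U * Uᵀ = 1)
    (X : Matrix m n ℝ) : frobNorm (U * X) ≤ frobNorm X := by
  classical
  set Q : Matrix m m ℝ := 1 - Uᵀ * U
  have hQ : Qᵀ * Q = Q := by
    simp only [Q, transpose_sub, transpose_one, transpose_mul, transpose_transpose,
      Matrix.sub_mul, Matrix.mul_sub, Matrix.one_mul, Matrix.mul_one, Matrix.mul_assoc]
    rw [← Matrix.mul_assoc U, hU, Matrix.one_mul, sub_self, sub_zero]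
  have hgap : frobNorm X ^ 2 - frobNorm (U * X) ^ 2 = frobNorm (Q * X) ^ 2 := by
    simp only [frobNorm_sq_eq_trace_transpose_mul, transpose_mul, Matrix.mul_assoc]
    rw [← Matrix.mul_assoc Qᵀ, hQ]
    simp only [Q, Matrix.sub_mul, Matrix.mul_sub, Matrix.one_mul, trace_sub, Matrix.mul_assoc]
  refine (pow_le_pow_iff_left₀ (frobNorm_nonneg _) (frobNorm_nonneg _) two_ne_zero).mp ?_
  nlinarith [sq_nonneg (frobNorm (Q * X))]

lemma frobNorm_sq_transpose_mul_diagonal_mul [DecidableEq k] {X : Matrix k m ℝ} {P : Matrix k n ℝ}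
    (hX : X * Xᵀ = 1) (hP : P * Pᵀ = 1) (d : k → ℝ) :
    frobNorm (Xᵀ * diagonal d * P) ^ 2 = ∑ i, d i ^ 2 := by
  rw [frobNorm_sq_eq_trace_mul_transpose]
  simp only [transpose_mul, diagonal_transpose, transpose_transpose, Matrix.mul_assoc]
  rw [trace_mul_comm]
  simp only [Matrix.mul_assoc]
  rw [← Matrix.mul_assoc P, hP, Matrix.one_mul, hX, Matrix.mul_one, diagonal_mul_diagonal,
    trace_diagonal]
  simp only [sq]

end Frobenius

lemma Matrix.submatrix_one_mul_transpose {ι κ R : Type*} [Fintype κ] [DecidableEq ι]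
    [DecidableEq κ] [Semiring R] (e : ι ↪ κ) :
    (1 : Matrix κ κ R).submatrix e id * ((1 : Matrix κ κ R).submatrix e id)ᵀ = 1 := by
  rw [transpose_submatrix, transpose_one, ← submatrix_mul _ _ _ _ _ Function.bijective_id,
    Matrix.one_mul, submatrix_one_embedding]

lemma Matrix.IsHermitian.exists_eq_transpose_mul_diagonal_mul {n : Type*} [Fintype n]
    [DecidableEq n] {S : Matrix n n ℝ} (hS : S.IsHermitian) :
    ∃ (r : ℕ) (f : Fin r ↪ n) (V : Matrix (Fin r) n ℝ), r = S.rank ∧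
      (∀ i, hS.eigenvalues i ≠ 0 ↔ i ∈ Set.range f) ∧ V * Vᵀ = 1 ∧
        S = Vᵀ * diagonal (hS.eigenvalues ∘ f) * V := by
  let e : Fin S.rank ≃ {i // hS.eigenvalues i ≠ 0} :=
    (Fintype.equivFinOfCardEq hS.rank_eq_card_non_zero_eigs.symm).symm
  let f : Fin S.rank ↪ n := e.toEmbedding.trans (Function.Embedding.subtype _)
  let W : Matrix n n ℝ := hS.eigenvectorUnitary
  have hWW : Wᵀ * W = 1 := by
    simpa [W, star_eq_conjTranspose, conjTranspose_eq_transpose_of_trivial] using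
      Unitary.coe_star_mul_self hS.eigenvectorUnitary
  have hS' : S = W * diagonal hS.eigenvalues * Wᵀ := by
    simpa [W, Unitary.conjStarAlgAut_apply, star_eq_conjTranspose,
      conjTranspose_eq_transpose_of_trivial, RCLike.ofReal_real_eq_id] using hS.spectral_theorem
  have hrange : ∀ i, hS.eigenvalues i ≠ 0 ↔ i ∈ Set.range f := fun i =>
    ⟨fun h => ⟨e.symm ⟨i, h⟩, by simp [f]⟩, by rintro ⟨k, rfl⟩; exact (e k).2⟩
  refine ⟨_, f, Wᵀ.submatrix f id, rfl, hrange, ?_, ?_⟩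
  · rw [transpose_submatrix, transpose_transpose, ← submatrix_mul _ _ _ _ _ Function.bijective_id,
      hWW, submatrix_one_embedding]
  · ext a b
    rw [congrFun₂ hS' a b, mul_apply, mul_apply]
    simp only [mul_diagonal, transpose_apply, submatrix_apply, id, Function.comp_apply]
    refine (Fintype.sum_of_injective f f.injective _ _ (fun i hi => ?_) fun _ => rfl).symm
    simp [not_not.mp (mt (hrange i).mp hi)]

lemma Matrix.mul_transpose_mul_eq_self_of_transpose_mul_self_eq {m n r : Type*} [Fintype m]
    [Fintype n] [Fintype r] [DecidableEq n] [DecidableEq r] {A : Matrix m n ℝ}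
    {V : Matrix r n ℝ} {D : Matrix r r ℝ} (hV : V * Vᵀ = 1) (hAA : Aᵀ * A = Vᵀ * D * V) :
    A * Vᵀ * V = A := by
  have : Aᴴ * A * (1 - Vᵀ * V) = 0 := by
    rw [conjTranspose_eq_transpose_of_trivial, hAA]
    simp only [Matrix.mul_sub, Matrix.mul_one, Matrix.mul_assoc, ← Matrix.mul_assoc V Vᵀ, hV,
      Matrix.one_mul, sub_self]
  rw [conjTranspose_mul_self_mul_eq_zero, Matrix.mul_sub, Matrix.mul_one, sub_eq_zero] at this
  rw [Matrix.mul_assoc, ← this]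

lemma Matrix.exists_svd {m n : Type*} [Fintype m] [Fintype n] [DecidableEq n]
    (A : Matrix m n ℝ) :
    ∃ (r : ℕ) (U : Matrix (Fin r) m ℝ) (V : Matrix (Fin r) n ℝ) (σ : Fin r → ℝ),
      r = A.rank ∧ U * Uᵀ = 1 ∧ V * Vᵀ = 1 ∧ (∀ i, 0 < σ i) ∧ A = Uᵀ * diagonal σ * V ∧
        nuclearNorm A = ∑ i, σ i := by
  have hS : (Aᵀ * A).IsHermitian := by simpa using isHermitian_conjTranspose_mul_self A
  obtain ⟨r, f, V, hr, hrange, hV, hAA⟩ := hS.exists_eq_transpose_mul_diagonal_mul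
  have heig : ∀ i, 0 ≤ hS.eigenvalues i := (posSemidef_conjTranspose_mul_self A).eigenvalues_nonneg
  set d := hS.eigenvalues
  set σ : Fin r → ℝ := fun k => √(d (f k))
  have hσ : ∀ k, 0 < σ k := fun k =>
    Real.sqrt_pos.mpr <| (heig _).lt_of_ne ((hrange _).mpr ⟨k, rfl⟩).symm
  have hσσ : diagonal σ * diagonal σ = diagonal (d ∘ f) := by
    rw [diagonal_mul_diagonal]
    exact congrArg diagonal (funext fun k => Real.mul_self_sqrt (heig _))
  have hVAAV : V * (Aᵀ * A) * Vᵀ = diagonal (d ∘ f) := by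
    rw [hAA]
    simp only [Matrix.mul_assoc, hV, Matrix.mul_one]
    rw [← Matrix.mul_assoc, hV, Matrix.one_mul]
  have hAVV := mul_transpose_mul_eq_self_of_transpose_mul_self_eq hV hAA
  have hσinv : diagonal σ⁻¹ * diagonal σ = 1 := by
    rw [diagonal_mul_diagonal, ← diagonal_one]
    exact congrArg diagonal (funext fun k => inv_mul_cancel₀ (hσ k).ne')
  refine ⟨r, diagonal σ⁻¹ * V * Aᵀ, V, σ, hr.trans (rank_transpose_mul_self A), ?_, hV, hσ, ?_, ?_⟩
  · calc diagonal σ⁻¹ * V * Aᵀ * (diagonal σ⁻¹ * V * Aᵀ)ᵀ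
          = diagonal σ⁻¹ * (V * (Aᵀ * A) * Vᵀ) * diagonal σ⁻¹ := by
            simp only [transpose_mul, diagonal_transpose, transpose_transpose, Matrix.mul_assoc]
        _ = 1 := by
            rw [hVAAV, ← hσσ, diagonal_mul_diagonal, diagonal_mul_diagonal, diagonal_mul_diagonal,
              ← diagonal_one]
            exact congrArg diagonal (funext fun k => by simp [(hσ k).ne'])
  · calc A = A * Vᵀ * (diagonal σ⁻¹ * diagonal σ) * V := by
            rw [hσinv, Matrix.mul_one, hAVV]
        _ = (diagonal σ⁻¹ * V * Aᵀ)ᵀ * diagonal σ * V := by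
            simp only [transpose_mul, diagonal_transpose, transpose_transpose, Matrix.mul_assoc]
  · show ∑ i, √(d i) = ∑ k, σ k
    exact (Fintype.sum_of_injective f f.injective _ _ (fun i hi => by
      simp [not_not.mp (mt (hrange i).mp hi)]) fun _ => rfl).symm

section NuclearNorm

variable {m n k : Type*} [Fintype m] [Fintype n] [Fintype k] [DecidableEq n]

lemma nuclearNorm_le_of_mul_transpose_eq {A : Matrix m n ℝ} {B : Matrix m k ℝ}
    {F : Matrix n k ℝ} (h : B * Fᵀ = A) :
    nuclearNorm A ≤ 1 / 2 * frobNorm B ^ 2 + 1 / 2 * frobNorm F ^ 2 := by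
  obtain ⟨r, U, V, σ, -, hU, hV, -, hA, hnuc⟩ := A.exists_svd
  have hσ : diagonal σ = U * B * (V * F)ᵀ := by
    calc diagonal σ = U * A * Vᵀ := by
          rw [hA]
          simp only [Matrix.mul_assoc, hV, Matrix.mul_one]
          rw [← Matrix.mul_assoc, hU, Matrix.one_mul]
      _ = U * B * (V * F)ᵀ := by simp only [← h, transpose_mul, Matrix.mul_assoc]
  have hUB := frobNorm_mul_le_of_mul_transpose_eq_one hU B
  have hVF := frobNorm_mul_le_of_mul_transpose_eq_one hV F
  calc nuclearNorm A = trace (U * B * (V * F)ᵀ) := by rw [hnuc, ← hσ, trace_diagonal]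
    _ ≤ 1 / 2 * frobNorm (U * B) ^ 2 + 1 / 2 * frobNorm (V * F) ^ 2 :=
      trace_mul_transpose_le _ _
    _ ≤ 1 / 2 * frobNorm B ^ 2 + 1 / 2 * frobNorm F ^ 2 := by
      gcongr <;> exact frobNorm_nonneg _

lemma exists_mul_transpose_eq_and_half_frobNorm_sq_eq_nuclearNorm {K : ℕ} (A : Matrix m n ℝ)
    (hK : A.rank ≤ K) :
    ∃ (B : Matrix m (Fin K) ℝ) (F : Matrix n (Fin K) ℝ),
      B * Fᵀ = A ∧ 1 / 2 * frobNorm B ^ 2 + 1 / 2 * frobNorm F ^ 2 = nuclearNorm A := by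
  obtain ⟨r, U, V, σ, hr, hU, hV, hσ, hA, hnuc⟩ := A.exists_svd
  set P : Matrix (Fin r) (Fin K) ℝ :=
    (1 : Matrix (Fin K) (Fin K) ℝ).submatrix (Fin.castLEEmb (hr.le.trans hK)) id
  have hP : P * Pᵀ = 1 := submatrix_one_mul_transpose _
  set τ : Fin r → ℝ := fun i => √(σ i)
  have hτ : ∀ i, τ i ^ 2 = σ i := fun i => Real.sq_sqrt (hσ i).le
  refine ⟨Uᵀ * diagonal τ * P, Vᵀ * diagonal τ * P, ?_, ?_⟩
  · rw [hA]
    simp only [transpose_mul, diagonal_transpose, transpose_transpose, Matrix.mul_assoc]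
    rw [← Matrix.mul_assoc P, hP, Matrix.one_mul, ← Matrix.mul_assoc (diagonal τ),
      diagonal_mul_diagonal]
    simp only [← sq, hτ]
  · rw [frobNorm_sq_transpose_mul_diagonal_mul hU hP, frobNorm_sq_transpose_mul_diagonal_mul hV hP,
      hnuc]
    simp only [hτ]
    ring

end NuclearNorm

/-- The nuclear norm of an `N × T` matrix of rank at most `K` equals the infimum of
`½‖B‖_F² + ½‖F‖_F²` over all factorizations `A = B Fᵀ` with `B : N × K`, `F : T × K`. -/
theorem stmt0 {N T K : ℕ} (A : Matrix (Fin N) (Fin T) ℝ) (hrank : A.rank ≤ K) :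
    nuclearNorm A =
      sInf {x : ℝ | ∃ (B : Matrix (Fin N) (Fin K) ℝ) (F : Matrix (Fin T) (Fin K) ℝ),
        B * Fᵀ = A ∧ x = (1 / 2) * frobNorm B ^ 2 + (1 / 2) * frobNorm F ^ 2} := by
  obtain ⟨B, F, hBF, hnuc⟩ := exists_mul_transpose_eq_and_half_frobNorm_sq_eq_nuclearNorm A hrank
  refine (IsLeast.csInf_eq ?_).symm
  refine ⟨⟨B, F, hBF, hnuc.symm⟩, ?_⟩
  rintro x ⟨B', F', hBF', rfl⟩
  exact nuclearNorm_le_of_mul_transpose_eq hBF'
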